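/- arXiv:2004.03963 — 4 statements merged into one kernel-verified Lean document; each statement's English description precedes it below -/
import Mathlib

section
/- Let k be a positive integer with 1 ≤ k ≤ n/2 and let C ⊆ F_2^n be a (k,k)-design such that no two points of C are antipodal (i.e., x ∈ C implies −x ∉ C). Then D = C ∪ (−C), where −C = {−x : x ∈ C}, is an antipodal (2k+1)-design in F_2^n. -/
open Finset

/-- The Krawtchouk polynomials `Q_i^{(n)}(t)`, determined by `Q_0 = 1`, `Q_1 = t` and the
three-term recurrence `n·t·Q_i(t) = (n−i)·Q_{i+1}(t) + i·Q_{i−1}(t)`. -/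
noncomputable def kraw (n : ℕ) : ℕ → ℝ → ℝ
  | 0, _ => 1
  | 1, t => t
  | (i+2), t =>
      ((n : ℝ) * t * kraw n (i+1) t - ((i : ℝ) + 1) * kraw n i t) / ((n : ℝ) - ((i : ℝ) + 1))

/-- The "inner product" `⟨x,y⟩ = 1 − 2 d(x,y)/n`. -/
noncomputable def ip (n : ℕ) (x y : Fin n → ZMod 2) : ℝ :=
  1 - 2 * (hammingDist x y : ℝ) / (n : ℝ)

/-- The `i`-th moment `M_i(C) = ∑_{x,y ∈ C} Q_i^{(n)}(⟨x,y⟩)`. -/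
noncomputable def moment (n : ℕ) (C : Finset (Fin n → ZMod 2)) (i : ℕ) : ℝ :=
  ∑ x ∈ C, ∑ y ∈ C, kraw n i (ip n x y)

/-- The antipodal (complement) point `−x`. -/
def antip {n : ℕ} (x : Fin n → ZMod 2) : Fin n → ZMod 2 := fun j => x j + 1

/-- `C` is a `(k,k)`-design: a nonempty code with `M_i(C) = 0` for all even `i` with `2 ≤ i ≤ 2k`. -/
def IsKKDesign (n k : ℕ) (C : Finset (Fin n → ZMod 2)) : Prop :=
  C.Nonempty ∧ ∀ j : ℕ, 1 ≤ j → j ≤ k → moment n C (2 * j) = 0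

/-- `C` is an `m`-design: a nonempty code with `M_i(C) = 0` for all `1 ≤ i ≤ m`. -/
def IsMDesign (n m : ℕ) (C : Finset (Fin n → ZMod 2)) : Prop :=
  C.Nonempty ∧ ∀ i : ℕ, 1 ≤ i → i ≤ m → moment n C i = 0

/-- Generalized binomial coefficient `C(z,j)` for real `z`. -/
noncomputable def gchoose (z : ℝ) (j : ℕ) : ℝ :=
  (∏ i ∈ Finset.range j, (z - (i : ℝ))) / (Nat.factorial j : ℝ)

/-- The Krawtchouk polynomial `K_i^{(m)}(z)` in the variable `z`. -/
noncomputable def krawK (m i : ℕ) (z : ℝ) : ℝ :=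
  ∑ j ∈ Finset.range (i + 1), (-1 : ℝ) ^ j * gchoose z j * gchoose ((m : ℝ) - z) (i - j)

/-- The adjacent polynomial `Q_i^{1,1}(t) = K_i^{(n−2)}(n(1−t)/2 − 1) / ∑_{j=0}^i C(n−1,j)`. -/
noncomputable def Q11 (n i : ℕ) (t : ℝ) : ℝ :=
  krawK (n - 2) i ((n : ℝ) * (1 - t) / 2 - 1) /
    (∑ j ∈ Finset.range (i + 1), ((n - 1).choose j : ℝ))

lemma kraw_neg (n i : ℕ) (t : ℝ) : kraw n i (-t) = (-1) ^ i * kraw n i t := by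
  induction i using Nat.strong_induction_on generalizing t with
  | _ i ih =>
    match i with
    | 0 => simp [kraw]
    | 1 => simp [kraw]
    | i + 2 =>
      rw [kraw, kraw, ih (i + 1) (by omega), ih i (by omega), pow_succ, pow_succ]
      ring

lemma antip_involutive {n : ℕ} : Function.Involutive (antip (n := n)) := by
  have h : ∀ a : ZMod 2, a + 1 + 1 = a := by decide
  exact fun x => funext fun j => h (x j)

lemma hammingDist_antip_add_hammingDist {n : ℕ} (x y : Fin n → ZMod 2) :
    hammingDist x (antip y) + hammingDist x y = n := by
  have h : ∀ a b : ZMod 2, a ≠ b + 1 ↔ ¬a ≠ b := by decide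
  simp only [hammingDist, antip, h]
  rw [add_comm, card_filter_add_card_filter_not, card_univ, Fintype.card_fin]

lemma ip_antip_right {n : ℕ} (hn : 0 < n) (x y : Fin n → ZMod 2) :
    ip n x (antip y) = -ip n x y := by
  have hsum : (hammingDist x (antip y) : ℝ) + hammingDist x y = n := by
    exact_mod_cast hammingDist_antip_add_hammingDist x y
  have hn' : (n : ℝ) ≠ 0 := by positivity
  unfold ip
  field_simp
  linarith

lemma ip_antip_left {n : ℕ} (hn : 0 < n) (x y : Fin n → ZMod 2) :
    ip n (antip x) y = -ip n x y := by
  unfold ip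
  rw [hammingDist_comm, hammingDist_comm x]
  exact ip_antip_right hn y x

lemma disjoint_image_antip {n : ℕ} {C : Finset (Fin n → ZMod 2)}
    (hC : ∀ x ∈ C, antip x ∉ C) : Disjoint C (C.image antip) := by
  rw [disjoint_right]
  intro _ hy
  obtain ⟨x, hx, rfl⟩ := mem_image.mp hy
  exact hC x hx

lemma antip_mem_union_image_antip {n : ℕ} {C : Finset (Fin n → ZMod 2)} {x : Fin n → ZMod 2}
    (hx : x ∈ C ∪ C.image antip) : antip x ∈ C ∪ C.image antip := by
  rcases mem_union.mp hx with hxC | hxA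
  · exact mem_union_right _ (mem_image_of_mem _ hxC)
  · obtain ⟨y, hyC, rfl⟩ := mem_image.mp hxA
    rw [antip_involutive y]
    exact mem_union_left _ hyC

/- Since `⟨±x, ±y⟩ = ±⟨x, y⟩` and `Q_i` has parity `i`, each of the four blocks of the double sum
equals `±M_i(C)`. -/
lemma moment_union_image_antip {n : ℕ} (hn : 0 < n) (C : Finset (Fin n → ZMod 2)) (i : ℕ)
    (hdisj : Disjoint C (C.image antip)) :
    moment n (C ∪ C.image antip) i = (2 + 2 * (-1 : ℝ) ^ i) * moment n C i := by
  have hinj : Set.InjOn antip (C : Set (Fin n → ZMod 2)) := antip_involutive.injective.injOn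
  have hsq : (-1 : ℝ) ^ i * (-1) ^ i = 1 := by rw [← mul_pow]; norm_num
  simp only [moment, sum_union hdisj, sum_image hinj, ip_antip_right hn, ip_antip_left hn,
    kraw_neg, ← mul_sum, sum_add_distrib]
  linear_combination (∑ x ∈ C, ∑ y ∈ C, kraw n i (ip n x y)) * hsq

theorem stmt_1_general (n k : ℕ) (hn : 0 < n)
    (C : Finset (Fin n → ZMod 2))
    (hC : IsKKDesign n k C)
    (hnoanti : ∀ x ∈ C, antip x ∉ C) :
    (∀ x ∈ C ∪ C.image antip, antip x ∈ C ∪ C.image antip) ∧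
      IsMDesign n (2 * k + 1) (C ∪ C.image antip) := by
  refine ⟨fun _ => antip_mem_union_image_antip,
    hC.1.mono subset_union_left, fun i hi₁ hi₂ => ?_⟩
  rw [moment_union_image_antip hn C i (disjoint_image_antip hnoanti)]
  rcases Nat.even_or_odd' i with ⟨j, rfl | rfl⟩
  · rw [hC.2 j (by omega) (by omega), mul_zero]
  · rw [Odd.neg_one_pow ⟨j, rfl⟩]
    ring

/-- doubling an antipodal-pair-free `(k,k)`-design yields an antipodal
`(2k+1)`-design. -/
theorem stmt_1 (n k : ℕ) (hn : 0 < n) (hk : 1 ≤ k) (hkn : 2 * k ≤ n)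
    (C : Finset (Fin n → ZMod 2))
    (hC : IsKKDesign n k C)
    (hnoanti : ∀ x ∈ C, antip x ∉ C) :
    (∀ x ∈ C ∪ C.image antip, antip x ∈ C ∪ C.image antip) ∧
      IsMDesign n (2 * k + 1) (C ∪ C.image antip) :=
  stmt_1_general n k hn C hC hnoanti
end

section
/- Let k be a positive integer with 1 ≤ k ≤ n/2, let f_0, f_1, …, f_n be real numbers with f_0 > 0, with f_j ≤ 0 for every odd j with 1 ≤ j ≤ n and for every j with 2k+1 ≤ j ≤ n, and set f(t) := ∑_{j=0}^n f_j·Q_j^{(n)}(t). Suppose f(t) ≥ 0 for every t ∈ T_n := {−1 + 2i/n : i = 0, 1, …, n}. If a (k,k)-design C ⊆ F_2^n satisfies |C| = f(1)/f_0, then f(⟨x,y⟩) = 0 for all distinct x, y ∈ C, and f_i·M_i(C) = 0 for every i with 1 ≤ i ≤ n. -/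
/-!
Delsarte's argument. For `z ∈ F_2^n` put `χ_z(x) = (-1)^{z·x}`. The generating function
`∑_z χ_z(w) X^{|z|} = (1 + X)^{n-|w|} (1 - X)^{|w|}` satisfies a first-order differential equation
whose coefficients give the three-term recurrence of the Krawtchouk polynomials; hence
`C(n,i) Q_i(⟨x,y⟩) = ∑_{|z|=i} χ_z(x) χ_z(y)` and `C(n,i) M_i(C) = ∑_{|z|=i} (∑_{x∈C} χ_z(x))² ≥ 0`.
Summing `f(⟨x,y⟩)` over `C × C` gives
`|C| f(1) + ∑_{x ≠ y} f(⟨x,y⟩) = f_0 |C|² + ∑_{i ≥ 1} f_i M_i(C)`.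
If `|C| = f(1)/f_0`, the off-diagonal sum, whose terms are `≥ 0` because `⟨x,y⟩ ∈ T_n`, equals
`∑_{i ≥ 1} f_i M_i(C)`, whose terms are `≤ 0`: the design kills the even moments up to `2k`, and
`f_i ≤ 0` for the remaining `i`. So all terms of both sums vanish.
-/

open Finset

open Polynomial Matrix

theorem ZMod.eq_zero_or_eq_one (a : ZMod 2) : a = 0 ∨ a = 1 := by
  revert a; decide

noncomputable def signChar : AddChar (ZMod 2) ℝ where
  toFun a := if a = 0 then 1 else -1
  map_zero_eq_one' := if_pos rfl
  map_add_eq_mul' a b := by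
    obtain rfl | rfl := a.eq_zero_or_eq_one <;> obtain rfl | rfl := b.eq_zero_or_eq_one <;>
      simp [show (1 + 1 : ZMod 2) = 0 from rfl]

theorem AddChar.map_sum_eq_prod {A M ι : Type*} [AddCommMonoid A] [CommMonoid M]
    (ψ : AddChar A M) (s : Finset ι) (g : ι → A) :
    ψ (∑ i ∈ s, g i) = ∏ i ∈ s, ψ (g i) := by
  classical
  induction s using Finset.induction_on with
  | empty => simp
  | insert a s ha ih => rw [sum_insert ha, prod_insert ha, ψ.map_add_eq_mul, ih]

theorem mul_derivative_pow {R : Type*} [CommSemiring R] (p : R[X]) (a : ℕ) :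
    p * derivative (p ^ a) = C (a : R) * derivative p * p ^ a := by
  cases a with
  | zero => simp
  | succ a => rw [derivative_pow, Nat.add_sub_cancel, pow_succ]; ring

noncomputable def krawGenPoly (n d : ℕ) : ℝ[X] := (1 + X) ^ (n - d) * (1 - X) ^ d

theorem prod_ite_eq_X_pow_hammingNorm {ι β R : Type*} [Fintype ι] [Zero β] [DecidableEq β]
    [CommSemiring R] (z : ι → β) :
    ∏ j, (if z j = 0 then 1 else (X : R[X])) = X ^ hammingNorm z := by
  rw [prod_ite, prod_const_one, prod_const, one_mul]; rfl

theorem sum_signChar_mul_X_pow_hammingNorm {ι : Type*} [Fintype ι] [DecidableEq ι]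
    (w : ι → ZMod 2) :
    ∑ z : ι → ZMod 2, C (signChar (z ⬝ᵥ w)) * X ^ hammingNorm z =
      krawGenPoly (Fintype.card ι) (hammingNorm w) := by
  have hfactor : ∀ j, ∑ a : ZMod 2, C (signChar (a * w j)) * (if a = 0 then 1 else X) =
      if w j = 0 then 1 + X else 1 - X := by
    intro j
    rw [show (univ : Finset (ZMod 2)) = {0, 1} from rfl, sum_pair zero_ne_one]
    obtain h | h := (w j).eq_zero_or_eq_one <;> simp [h, signChar, sub_eq_add_neg]
  calc ∑ z : ι → ZMod 2, C (signChar (z ⬝ᵥ w)) * X ^ hammingNorm z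
      = ∑ z : ι → ZMod 2, ∏ j, C (signChar (z j * w j)) * (if z j = 0 then 1 else X) := by
        refine sum_congr rfl fun z _ => ?_
        rw [prod_mul_distrib, prod_ite_eq_X_pow_hammingNorm, dotProduct,
          signChar.map_sum_eq_prod, map_prod]
    _ = ∏ j, if w j = 0 then 1 + X else 1 - X := by
        rw [← Fintype.prod_sum (fun j a => C (signChar (a * w j)) * (if a = 0 then 1 else X))]
        exact prod_congr rfl fun j _ => hfactor j
    _ = _ := by
        rw [prod_ite, prod_const, prod_const, krawGenPoly]
        congr 2
        have := card_filter_add_card_filter_not (s := univ) (fun j => w j = 0)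
        rw [card_univ] at this
        simp only [hammingNorm, ne_eq]
        omega

theorem coeff_krawGenPoly_hammingNorm {ι : Type*} [Fintype ι] [DecidableEq ι] (w : ι → ZMod 2)
    (i : ℕ) :
    (krawGenPoly (Fintype.card ι) (hammingNorm w)).coeff i =
      ∑ z with hammingNorm z = i, signChar (z ⬝ᵥ w) := by
  rw [← sum_signChar_mul_X_pow_hammingNorm, finsetSum_coeff, sum_filter]
  refine sum_congr rfl fun z _ => ?_
  rw [coeff_C_mul_X_pow]
  split_ifs <;> simp_all [eq_comm]

theorem one_sub_X_sq_mul_derivative_krawGenPoly {n d : ℕ} (hd : d ≤ n) :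
    (1 - X ^ 2) * derivative (krawGenPoly n d) =
      (C ((n : ℝ) - 2 * d) - C (n : ℝ) * X) * krawGenPoly n d := by
  have hplus := mul_derivative_pow (1 + X : ℝ[X]) (n - d)
  have hminus := mul_derivative_pow (1 - X : ℝ[X]) d
  simp only [derivative_add, derivative_sub, derivative_one, derivative_X] at hplus hminus
  rw [Nat.cast_sub hd, map_sub] at hplus
  rw [krawGenPoly, derivative_mul, map_sub, map_mul, map_ofNat]
  linear_combination (1 - X) * (1 - X) ^ d * hplus + (1 + X) * (1 + X) ^ (n - d) * hminus

theorem coeff_X_mul_derivative {R : Type*} [CommSemiring R] (p : R[X]) (i : ℕ) :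
    (X * derivative p).coeff i = i * p.coeff i := by
  cases i with
  | zero => simp
  | succ i => rw [coeff_X_mul, coeff_derivative, mul_comm, Nat.cast_succ]

theorem coeff_krawGenPoly_zero (n d : ℕ) : (krawGenPoly n d).coeff 0 = 1 := by
  simp [coeff_zero_eq_eval_zero, krawGenPoly]

theorem coeff_krawGenPoly_one {n d : ℕ} (hd : d ≤ n) :
    (krawGenPoly n d).coeff 1 = n - 2 * d := by
  have h := congrArg (coeff · 0) (one_sub_X_sq_mul_derivative_krawGenPoly hd)
  simp only [sub_mul, one_mul, coeff_sub, pow_two, mul_assoc, coeff_X_mul_zero, coeff_derivative,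
    coeff_C_mul, coeff_krawGenPoly_zero] at h
  linear_combination h

theorem coeff_krawGenPoly_add_two {n d : ℕ} (hd : d ≤ n) (i : ℕ) :
    ((i : ℝ) + 2) * (krawGenPoly n d).coeff (i + 2) =
      (n - 2 * d) * (krawGenPoly n d).coeff (i + 1) - (n - i) * (krawGenPoly n d).coeff i := by
  have h := congrArg (coeff · (i + 1)) (one_sub_X_sq_mul_derivative_krawGenPoly hd)
  simp only [sub_mul, one_mul, coeff_sub, pow_two, mul_assoc, coeff_X_mul, coeff_X_mul_derivative,
    coeff_derivative, coeff_C_mul] at h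
  push_cast at h
  linear_combination h

theorem kraw_eq_of_recurrence {n : ℕ} {t : ℝ} {g : ℕ → ℝ} (h0 : g 0 = 1) (h1 : g 1 = t)
    (hrec : ∀ i, i + 2 ≤ n →
      ((n : ℝ) - (i + 1)) * g (i + 2) = n * t * g (i + 1) - (i + 1) * g i) :
    ∀ i ≤ n, kraw n i t = g i := by
  intro i
  induction i using Nat.twoStepInduction with
  | zero => exact fun _ => h0.symm
  | one => exact fun _ => h1.symm
  | more i ih₀ ih₁ =>
    intro hi
    have hpos : (0 : ℝ) < n - (i + 1) := by
      rw [sub_pos]; exact_mod_cast (by omega : i + 1 < n)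
    rw [kraw, ih₀ (by omega), ih₁ (by omega), div_eq_iff hpos.ne', ← hrec i hi]
    ring

theorem cast_choose_succ_mul (n i : ℕ) :
    (n.choose (i + 1) : ℝ) * (i + 1) = n.choose i * (n - i) := by
  rcases le_or_gt i n with hi | hi
  · rw [← Nat.cast_sub hi]
    exact_mod_cast Nat.choose_succ_right_eq n i
  · simp [Nat.choose_eq_zero_of_lt hi, Nat.choose_eq_zero_of_lt (Nat.lt_succ_of_lt hi)]

theorem kraw_one_sub_eq_coeff_krawGenPoly_div_choose {n d : ℕ} (hn : 0 < n) (hd : d ≤ n) :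
    ∀ i ≤ n, kraw n i (1 - 2 * d / n) = (krawGenPoly n d).coeff i / n.choose i := by
  have hn' : (n : ℝ) ≠ 0 := by positivity
  apply kraw_eq_of_recurrence
  · simp [coeff_krawGenPoly_zero]
  · rw [coeff_krawGenPoly_one hd, Nat.choose_one_right]
    field_simp
  · intro i hi
    have hc₀ : (n.choose i : ℝ) ≠ 0 := by exact_mod_cast (Nat.choose_pos (by omega)).ne'
    have hc₁ : (n.choose (i + 1) : ℝ) ≠ 0 := by exact_mod_cast (Nat.choose_pos (by omega)).ne'
    have hc₂ : (n.choose (i + 2) : ℝ) ≠ 0 := by exact_mod_cast (Nat.choose_pos hi).ne'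
    have hrec := coeff_krawGenPoly_add_two hd i
    have hch₁ := cast_choose_succ_mul n i
    have hch₂ := cast_choose_succ_mul n (i + 1)
    push_cast at hch₂
    set c := (krawGenPoly n d).coeff
    have key : ((n : ℝ) - (i + 1)) * c (i + 2) * n.choose i * n.choose (i + 1) =
        (n - 2 * d) * c (i + 1) * n.choose i * n.choose (i + 2) -
          (i + 1) * c i * n.choose (i + 1) * n.choose (i + 2) := by
      linear_combination -c (i + 2) * n.choose i * hch₂ + n.choose i * n.choose (i + 2) * hrec +
        c i * n.choose (i + 2) * hch₁
    field_simp
    linear_combination key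

theorem kraw_ip_mul_choose {n : ℕ} (hn : 0 < n) {i : ℕ} (hi : i ≤ n) (x y : Fin n → ZMod 2) :
    kraw n i (ip n x y) * n.choose i =
      ∑ z with hammingNorm z = i, signChar (z ⬝ᵥ x) * signChar (z ⬝ᵥ y) := by
  have hd : hammingNorm (-x + y) ≤ n := by
    simpa using hammingNorm_le_card_fintype (x := -x + y)
  have hc : (n.choose i : ℝ) ≠ 0 := by exact_mod_cast (Nat.choose_pos hi).ne'
  rw [ip, hammingDist_eq_hammingNorm, kraw_one_sub_eq_coeff_krawGenPoly_div_choose hn hd i hi,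
    div_mul_cancel₀ _ hc]
  simpa only [Fintype.card_fin, dotProduct_add, dotProduct_neg, CharTwo.neg_eq,
    signChar.map_add_eq_mul] using coeff_krawGenPoly_hammingNorm (-x + y) i

theorem moment_mul_choose {n : ℕ} (hn : 0 < n) (C : Finset (Fin n → ZMod 2)) {i : ℕ}
    (hi : i ≤ n) :
    moment n C i * n.choose i = ∑ z with hammingNorm z = i, (∑ x ∈ C, signChar (z ⬝ᵥ x)) ^ 2 := by
  simp only [moment, sum_mul, mul_sum, kraw_ip_mul_choose hn hi, sq]
  rw [sum_comm]
  exact (sum_congr rfl fun _ _ => sum_comm).trans sum_comm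

theorem moment_nonneg {n : ℕ} (hn : 0 < n) (C : Finset (Fin n → ZMod 2)) {i : ℕ} (hi : i ≤ n) :
    0 ≤ moment n C i := by
  have hc : (0 : ℝ) < n.choose i := by exact_mod_cast Nat.choose_pos hi
  refine nonneg_of_mul_nonneg_left ?_ hc
  rw [moment_mul_choose hn C hi]
  positivity

theorem moment_zero (n : ℕ) (C : Finset (Fin n → ZMod 2)) : moment n C 0 = #C ^ 2 := by
  simp [moment, kraw, sq]

noncomputable def krawExpansion (n : ℕ) (f : ℕ → ℝ) (t : ℝ) : ℝ :=
  ∑ j ∈ range (n + 1), f j * kraw n j t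

theorem ip_self (n : ℕ) (x : Fin n → ZMod 2) : ip n x x = 1 := by
  simp [ip]

theorem ip_eq_neg_one_add {n : ℕ} (hn : 0 < n) (x y : Fin n → ZMod 2) :
    ip n x y = -1 + 2 * ((n - hammingDist x y : ℕ) : ℝ) / n := by
  have hd : hammingDist x y ≤ n := by simpa using hammingDist_le_card_fintype (x := x) (y := y)
  rw [ip, Nat.cast_sub hd]
  field_simp
  ring

theorem sum_sum_krawExpansion_ip (n : ℕ) (f : ℕ → ℝ) (C : Finset (Fin n → ZMod 2)) :
    ∑ x ∈ C, ∑ y ∈ C, krawExpansion n f (ip n x y) = ∑ j ∈ range (n + 1), f j * moment n C j := by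
  simp only [krawExpansion, moment, mul_sum]
  exact (sum_congr rfl fun _ _ => sum_comm).trans sum_comm

theorem sum_sum_erase_krawExpansion_ip (n : ℕ) (f : ℕ → ℝ) (C : Finset (Fin n → ZMod 2)) :
    ∑ x ∈ C, ∑ y ∈ C.erase x, krawExpansion n f (ip n x y) =
      ∑ j ∈ range n, f (j + 1) * moment n C (j + 1) + #C * (f 0 * #C - krawExpansion n f 1) := by
  have hsplit : ∀ x ∈ C, ∑ y ∈ C, krawExpansion n f (ip n x y) =
      krawExpansion n f 1 + ∑ y ∈ C.erase x, krawExpansion n f (ip n x y) := fun x hx => by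
    rw [← add_sum_erase C _ hx, ip_self]
  have htotal := sum_sum_krawExpansion_ip n f C
  rw [sum_congr rfl hsplit, sum_add_distrib, sum_const, nsmul_eq_mul, sum_range_succ',
    moment_zero] at htotal
  linear_combination htotal

theorem mul_moment_nonpos {n k : ℕ} (hn : 0 < n) {f : ℕ → ℝ}
    (hfodd : ∀ j : ℕ, 1 ≤ j → j ≤ n → Odd j → f j ≤ 0)
    (hfbig : ∀ j : ℕ, 2 * k + 1 ≤ j → j ≤ n → f j ≤ 0)
    {C : Finset (Fin n → ZMod 2)} (hC : IsKKDesign n k C) {j : ℕ} (hj : 1 ≤ j) (hjn : j ≤ n) :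
    f j * moment n C j ≤ 0 := by
  obtain ⟨m, rfl⟩ | hodd := Nat.even_or_odd j
  · by_cases hmk : m ≤ k
    · rw [← two_mul, hC.2 m (by omega) hmk, mul_zero]
    · exact mul_nonpos_of_nonpos_of_nonneg (hfbig _ (by omega) hjn) (moment_nonneg hn C hjn)
  · exact mul_nonpos_of_nonpos_of_nonneg (hfodd j hj hjn hodd) (moment_nonneg hn C hjn)

theorem stmt_6_general (n k : ℕ) (hn : 0 < n)
    (f : ℕ → ℝ) (hf0 : 0 < f 0)
    (hfodd : ∀ j : ℕ, 1 ≤ j → j ≤ n → Odd j → f j ≤ 0)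
    (hfbig : ∀ j : ℕ, 2 * k + 1 ≤ j → j ≤ n → f j ≤ 0)
    (hfpos : ∀ i : ℕ, i ≤ n →
      0 ≤ ∑ j ∈ Finset.range (n + 1), f j * kraw n j (-1 + 2 * (i : ℝ) / (n : ℝ)))
    (C : Finset (Fin n → ZMod 2)) (hC : IsKKDesign n k C)
    (heq : (C.card : ℝ) = (∑ j ∈ Finset.range (n + 1), f j * kraw n j 1) / f 0) :
    (∀ x ∈ C, ∀ y ∈ C, x ≠ y →
        ∑ j ∈ Finset.range (n + 1), f j * kraw n j (ip n x y) = 0) ∧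
      (∀ i : ℕ, 1 ≤ i → i ≤ n → f i * moment n C i = 0) := by
  have hF : ∀ x y, 0 ≤ krawExpansion n f (ip n x y) := fun x y => by
    rw [ip_eq_neg_one_add hn]; exact hfpos _ (Nat.sub_le _ _)
  have hM : ∀ j ∈ range n, f (j + 1) * moment n C (j + 1) ≤ 0 := fun j hj =>
    mul_moment_nonpos hn hfodd hfbig hC (by omega) (mem_range.1 hj)
  have hoff := sum_sum_erase_krawExpansion_ip n f C
  have hbound : f 0 * #C = krawExpansion n f 1 := by
    rw [heq, mul_div_cancel₀ _ hf0.ne', krawExpansion]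
  rw [hbound, sub_self, mul_zero, add_zero] at hoff
  have hpairs : ∑ x ∈ C, ∑ y ∈ C.erase x, krawExpansion n f (ip n x y) = 0 :=
    le_antisymm (hoff ▸ sum_nonpos hM) (sum_nonneg fun x _ => sum_nonneg fun y _ => hF x y)
  refine ⟨fun x hx y hy hxy => ?_, fun i hi hin => ?_⟩
  · have hx' := (sum_eq_zero_iff_of_nonneg fun x _ => sum_nonneg fun y _ => hF x y).1 hpairs x hx
    exact (sum_eq_zero_iff_of_nonneg fun y _ => hF x y).1 hx' y (mem_erase.2 ⟨hxy.symm, hy⟩)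
  · obtain ⟨j, rfl⟩ := Nat.exists_eq_add_of_le' hi
    exact (sum_eq_zero_iff_of_nonpos hM).1 (hoff ▸ hpairs) j (mem_range.2 (by omega))

/-- conditions for equality in the linear programming bound for
`(k,k)`-designs. -/
theorem stmt_6 (n k : ℕ) (hn : 0 < n) (hk : 1 ≤ k) (hkn : 2 * k ≤ n)
    (f : ℕ → ℝ) (hf0 : 0 < f 0)
    (hfodd : ∀ j : ℕ, 1 ≤ j → j ≤ n → Odd j → f j ≤ 0)
    (hfbig : ∀ j : ℕ, 2 * k + 1 ≤ j → j ≤ n → f j ≤ 0)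
    (hfpos : ∀ i : ℕ, i ≤ n →
      0 ≤ ∑ j ∈ Finset.range (n + 1), f j * kraw n j (-1 + 2 * (i : ℝ) / (n : ℝ)))
    (C : Finset (Fin n → ZMod 2)) (hC : IsKKDesign n k C)
    (heq : (C.card : ℝ) = (∑ j ∈ Finset.range (n + 1), f j * kraw n j 1) / f 0) :
    (∀ x ∈ C, ∀ y ∈ C, x ≠ y →
        ∑ j ∈ Finset.range (n + 1), f j * kraw n j (ip n x y) = 0) ∧
      (∀ i : ℕ, 1 ≤ i → i ≤ n → f i * moment n C i = 0) :=
  stmt_6_general n k hn f hf0 hfodd hfbig hfpos C hC heq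
end

section
/- Let k be a positive integer with 1 ≤ k ≤ n/2. Then every (k,k)-design C ⊆ F_2^n satisfies |C| ≥ ∑_{i=0}^k C(n−1, i), where C(n−1,i) denotes the binomial coefficient. -/
open Finset

/-!
Expanding the Krawtchouk polynomials in Walsh functions `w_S(x) = ∏_{j ∈ S} (-1)^{x_j}` gives
`C(n,i) · M_i(C) = ∑_{|S| = i} (∑_{x ∈ C} w_S(x))²`, so a `(k,k)`-design has vanishing Walsh sums
on every nonempty set of even size at most `2k`. Fix a coordinate `a` and pad every
`S ⊆ [n] ∖ {a}` with `|S| ≤ k` to a set of even size by adjoining `a` if necessary. Two distinct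
padded sets have a nonempty symmetric difference of even size at most `2k`, so their Walsh
functions are orthogonal on `C`. These `∑_{i ≤ k} C(n-1,i)` orthogonal vectors live in `ℝ^C`.
-/

section Finset

variable {α : Type*} [DecidableEq α]

lemma card_symmDiff_add_two_mul_card_inter (s t : Finset α) :
    #(symmDiff s t) + 2 * #(s ∩ t) = #s + #t := by
  have hsplit : symmDiff s t ∪ s ∩ t = s ∪ t := symmDiff_sup_inf s t
  have hdisj : Disjoint (symmDiff s t) (s ∩ t) := disjoint_symmDiff_inf s t
  have hunion := card_union_of_disjoint hdisj
  rw [hsplit] at hunion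
  have := card_union_add_card_inter s t
  omega

lemma card_biUnion_range_powersetCard (s : Finset α) (k : ℕ) :
    #((range (k + 1)).biUnion fun i => powersetCard i s) = ∑ i ∈ range (k + 1), (#s).choose i := by
  rw [card_biUnion fun i _ j _ hij => pairwise_disjoint_powersetCard s hij]
  simp_rw [card_powersetCard]

lemma sum_powersetCard_succ_sum_erase [Fintype α] {β : Type*} [AddCommMonoid β] (m : ℕ)
    (g : Finset α → Finset α → β) :
    ∑ U ∈ powersetCard (m + 1) univ, ∑ j ∈ U, g (U.erase j) U =
      ∑ T ∈ powersetCard m univ, ∑ j ∈ Tᶜ, g T (insert j T) := by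
  rw [sum_sigma', sum_sigma']
  refine sum_nbij' (fun p => ⟨p.1.erase p.2, p.2⟩) (fun q => ⟨insert q.2 q.1, q.2⟩)
    ?_ ?_ ?_ ?_ ?_
  · rintro ⟨U, j⟩ h
    simp only [mem_sigma, mem_powersetCard_univ] at h ⊢
    rw [card_erase_of_mem h.2, h.1, mem_compl]
    exact ⟨rfl, notMem_erase j U⟩
  · rintro ⟨T, j⟩ h
    simp only [mem_sigma, mem_powersetCard_univ, mem_compl] at h ⊢
    rw [card_insert_of_notMem h.2, h.1]
    exact ⟨rfl, mem_insert_self j T⟩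
  · rintro ⟨U, j⟩ h
    simp only [mem_sigma] at h
    simp only [insert_erase h.2]
  · rintro ⟨T, j⟩ h
    simp only [mem_sigma, mem_compl] at h
    simp only [erase_insert h.2]
  · rintro ⟨U, j⟩ h
    simp only [mem_sigma] at h
    simp only [insert_erase h.2]

end Finset

lemma natCast_choose_succ_mul (n k : ℕ) :
    (n.choose (k + 1) : ℝ) * (k + 1) = n.choose k * (n - k) := by
  rcases le_or_gt k n with hk | hk
  · have h := congrArg (Nat.cast (R := ℝ)) (Nat.choose_succ_right_eq n k)
    push_cast [Nat.cast_sub hk] at h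
    exact h
  · rw [Nat.choose_eq_zero_of_lt hk, Nat.choose_eq_zero_of_lt (by omega)]
    simp

lemma card_le_card_of_sum_mul_eq_zero {α ι : Type*} {C : Finset α} {A : Finset ι}
    (f : ι → α → ℝ) (hdiag : ∀ i ∈ A, ∑ x ∈ C, f i x * f i x ≠ 0)
    (horth : ∀ i ∈ A, ∀ j ∈ A, i ≠ j → ∑ x ∈ C, f i x * f j x = 0) : #A ≤ #C := by
  let v : A → EuclideanSpace ℝ C := fun i => WithLp.toLp 2 fun x => f i x
  have hinner (i j : A) : inner ℝ (v i) (v j) = ∑ x ∈ C, f i x * f j x := by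
    rw [PiLp.inner_apply, ← sum_coe_sort C]
    simp [v, mul_comm]
  have hli : LinearIndependent ℝ v := by
    refine linearIndependent_of_ne_zero_of_inner_eq_zero (fun i hv => ?_) (fun i j hij => ?_)
    · exact hdiag i i.2 (by rw [← hinner, hv, inner_zero_left])
    · change inner ℝ (v i) (v j) = 0
      rw [hinner]
      exact horth i i.2 j j.2 (Subtype.coe_injective.ne hij)
  simpa using hli.fintype_card_le_finrank

namespace BinaryCode

variable {α : Type*}

noncomputable def sgn (a : ZMod 2) : ℝ := if a = 0 then 1 else -1

lemma sgn_mul_self (a : ZMod 2) : sgn a * sgn a = 1 := by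
  unfold sgn; split_ifs <;> norm_num

lemma sgn_add (a b : ZMod 2) : sgn (a + b) = sgn a * sgn b := by
  have h : ∀ a : ZMod 2, a = 0 ∨ a = 1 := by decide
  rcases h a with rfl | rfl <;> rcases h b with rfl | rfl <;>
    simp only [sgn, add_zero, zero_add, CharTwo.add_self_eq_zero] <;> norm_num

lemma sum_sgn [Fintype α] (z : α → ZMod 2) :
    ∑ j, sgn (z j) = Fintype.card α - 2 * hammingNorm z := by
  have hcard := card_filter_add_card_filter_not (s := univ) (fun j => z j = 0)
  rw [card_univ] at hcard
  simp only [sgn, sum_ite, sum_const, nsmul_eq_mul, mul_one, mul_neg, hammingNorm]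
  rw [← hcard]
  push_cast
  ring

noncomputable def walsh (S : Finset α) (x : α → ZMod 2) : ℝ := ∏ j ∈ S, sgn (x j)

lemma walsh_mul_self (S : Finset α) (x : α → ZMod 2) : walsh S x * walsh S x = 1 := by
  rw [walsh, ← prod_mul_distrib]
  exact prod_eq_one fun j _ => sgn_mul_self (x j)

lemma walsh_add (S : Finset α) (x y : α → ZMod 2) :
    walsh S (x + y) = walsh S x * walsh S y := by
  rw [walsh, walsh, walsh, ← prod_mul_distrib]
  exact prod_congr rfl fun j _ => sgn_add _ _

lemma walsh_mul_walsh [DecidableEq α] (S T : Finset α) (x : α → ZMod 2) :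
    walsh S x * walsh T x = walsh (symmDiff S T) x := by
  have hST : walsh S x * walsh T x = walsh (S ∪ T) x * walsh (S ∩ T) x := prod_union_inter.symm
  have hU : walsh (S ∪ T) x = walsh (symmDiff S T) x * walsh (S ∩ T) x := by
    have hsplit : symmDiff S T ∪ S ∩ T = S ∪ T := symmDiff_sup_inf S T
    have hdisj : Disjoint (symmDiff S T) (S ∩ T) := disjoint_symmDiff_inf S T
    rw [walsh, ← hsplit, prod_union hdisj]; rfl
  rw [hST, hU, mul_assoc, walsh_mul_self, mul_one]

lemma sgn_mul_walsh_of_mem [DecidableEq α] {S : Finset α} {j : α} (hj : j ∈ S)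
    (z : α → ZMod 2) :
    sgn (z j) * walsh S z = walsh (S.erase j) z := by
  rw [walsh, ← mul_prod_erase _ _ hj, ← mul_assoc, sgn_mul_self, one_mul]; rfl

lemma sgn_mul_walsh_of_notMem [DecidableEq α] {S : Finset α} {j : α} (hj : j ∉ S)
    (z : α → ZMod 2) :
    sgn (z j) * walsh S z = walsh (insert j S) z := by
  rw [walsh, walsh, prod_insert hj]

section LevelSum

variable [Fintype α] [DecidableEq α]

/-- The value of the Krawtchouk polynomial `K_i` at the Hamming weight of `z`. -/
noncomputable def walshLevelSum (i : ℕ) (z : α → ZMod 2) : ℝ :=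
  ∑ S ∈ powersetCard i univ, walsh S z

lemma sum_sgn_mul_walshLevelSum (i : ℕ) (z : α → ZMod 2) :
    (∑ j, sgn (z j)) * walshLevelSum (i + 1) z =
      (i + 2) * walshLevelSum (i + 2) z + (Fintype.card α - i) * walshLevelSum i z := by
  have hdown : ∑ S ∈ powersetCard (i + 1) univ, ∑ j ∈ S, walsh (S.erase j) z =
      (Fintype.card α - i) * walshLevelSum i z := by
    rw [sum_powersetCard_succ_sum_erase i (fun T _ => walsh T z), walshLevelSum, mul_sum]
    refine sum_congr rfl fun T hT => ?_
    rw [mem_powersetCard_univ] at hT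
    rw [sum_const, card_compl, hT, nsmul_eq_mul, Nat.cast_sub (hT ▸ card_le_univ T)]
  have hup : ∑ S ∈ powersetCard (i + 1) univ, ∑ j ∈ Sᶜ, walsh (insert j S) z =
      (i + 2) * walshLevelSum (i + 2) z := by
    rw [← sum_powersetCard_succ_sum_erase (i + 1) (fun _ U => walsh U z), walshLevelSum, mul_sum]
    refine sum_congr rfl fun U hU => ?_
    rw [mem_powersetCard_univ] at hU
    rw [sum_const, hU, nsmul_eq_mul]
    push_cast; ring
  rw [← hdown, ← hup, walshLevelSum, mul_sum, ← sum_add_distrib]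
  refine sum_congr rfl fun S _ => ?_
  rw [sum_mul, ← sum_compl_add_sum S]
  congr 1
  · exact sum_congr rfl fun j hj => sgn_mul_walsh_of_notMem (mem_compl.1 hj) z
  · exact sum_congr rfl fun j hj => sgn_mul_walsh_of_mem hj z

end LevelSum

lemma choose_mul_kraw {n : ℕ} (z : Fin n → ZMod 2) {t : ℝ} (ht : n * t = ∑ j, sgn (z j))
    {i : ℕ} (hi : i ≤ n) : n.choose i * kraw n i t = walshLevelSum i z := by
  induction i using Nat.twoStepInduction with
  | zero => simp [kraw, walshLevelSum, walsh]
  | one =>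
    rw [Nat.choose_one_right, kraw, ht, walshLevelSum, powersetCard_one, sum_map]
    simp [walsh]
  | more i ih0 ih1 =>
    have hD : (n : ℝ) - (i + 1) ≠ 0 := by
      have : (i : ℝ) + 2 ≤ n := by exact_mod_cast hi
      linarith
    have hK : ((n : ℝ) - (i + 1)) * kraw n (i + 2) t =
        n * t * kraw n (i + 1) t - (i + 1) * kraw n i t := by
      rw [kraw]; field_simp
    have e2 := natCast_choose_succ_mul n (i + 1)
    have e1 := natCast_choose_succ_mul n i
    have hrec := sum_sgn_mul_walshLevelSum i z
    rw [Fintype.card_fin] at hrec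
    push_cast at e2
    -- `C(n,i+1)` times the recurrence of `kraw` is the recurrence of `walshLevelSum`.
    refine mul_left_cancel₀ (by positivity : (i : ℝ) + 2 ≠ 0) ?_
    linear_combination kraw n (i + 2) t * e2 + (n.choose (i + 1) : ℝ) * hK
      + n * t * ih1 (by omega) - kraw n i t * e1 - (n - i) * ih0 (by omega)
      + walshLevelSum (i + 1) z * ht + hrec

lemma natCast_mul_ip {n : ℕ} (x y : Fin n → ZMod 2) :
    n * ip n x y = ∑ j, sgn ((x + y) j) := by
  have hneg : x + y = -x + y := by ext j; simp [ZMod.neg_eq_self_mod_two]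
  rw [sum_sgn, Fintype.card_fin, hneg, ← hammingDist_eq_hammingNorm, ip]
  rcases eq_or_ne n 0 with rfl | hn
  · simp [hammingDist]
  · field_simp

lemma choose_mul_moment {n : ℕ} (C : Finset (Fin n → ZMod 2)) {i : ℕ} (hi : i ≤ n) :
    n.choose i * moment n C i = ∑ S ∈ powersetCard i univ, (∑ x ∈ C, walsh S x) ^ 2 := by
  calc n.choose i * moment n C i
      = ∑ x ∈ C, ∑ y ∈ C, ∑ S ∈ powersetCard i univ, walsh S x * walsh S y := by
        simp_rw [moment, mul_sum, choose_mul_kraw _ (natCast_mul_ip _ _) hi, walshLevelSum,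
          walsh_add]
    _ = ∑ x ∈ C, ∑ S ∈ powersetCard i univ, ∑ y ∈ C, walsh S x * walsh S y :=
        sum_congr rfl fun _ _ => sum_comm
    _ = ∑ S ∈ powersetCard i univ, ∑ x ∈ C, ∑ y ∈ C, walsh S x * walsh S y := sum_comm
    _ = ∑ S ∈ powersetCard i univ, (∑ x ∈ C, walsh S x) ^ 2 := by
        simp_rw [sq, sum_mul_sum]

section EvenPad

variable [DecidableEq α]

def evenPad (a : α) (S : Finset α) : Finset α := if Even #S then S else insert a S

variable {a : α} {S : Finset α}

lemma even_card_evenPad (ha : a ∉ S) : Even #(evenPad a S) := by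
  unfold evenPad
  split_ifs with h
  · exact h
  · rw [card_insert_of_notMem ha]
    exact (Nat.not_even_iff_odd.1 h).add_one

lemma evenPad_erase (ha : a ∉ S) : (evenPad a S).erase a = S := by
  unfold evenPad
  split_ifs
  · exact erase_eq_of_notMem ha
  · exact erase_insert ha

lemma mem_evenPad_of_ne {j : α} (hj : j ≠ a) : j ∈ evenPad a S ↔ j ∈ S := by
  unfold evenPad
  split_ifs
  · rfl
  · rw [mem_insert, or_iff_right hj]

lemma sum_walsh_evenPad_mul_eq_zero {C : Finset (α → ZMod 2)} {k : ℕ}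
    (hC : ∀ U : Finset α, U.Nonempty → Even #U → #U ≤ 2 * k → ∑ x ∈ C, walsh U x = 0)
    {T : Finset α} (haS : a ∉ S) (haT : a ∉ T) (hS : #S ≤ k) (hT : #T ≤ k) (hST : S ≠ T) :
    ∑ x ∈ C, walsh (evenPad a S) x * walsh (evenPad a T) x = 0 := by
  set U := symmDiff (evenPad a S) (evenPad a T) with hU
  have hne : U.Nonempty := by
    rw [nonempty_iff_ne_empty]
    intro h
    rw [← bot_eq_empty, symmDiff_eq_bot] at h
    exact hST (by rw [← evenPad_erase haS, ← evenPad_erase haT, h])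
  have heven : Even #U := by
    have := card_symmDiff_add_two_mul_card_inter (evenPad a S) (evenPad a T)
    rw [← hU] at this
    have hS' := even_card_evenPad haS
    have hT' := even_card_evenPad haT
    rw [Nat.even_iff] at hS' hT' ⊢
    omega
  have hsub : U ⊆ insert a (symmDiff S T) := by
    intro j hj
    by_cases hja : j = a
    · rw [hja]
      exact mem_insert_self a _
    · rw [hU, mem_symmDiff, mem_evenPad_of_ne hja, mem_evenPad_of_ne hja] at hj
      exact mem_insert_of_mem (mem_symmDiff.2 hj)
  have hle : #U ≤ 2 * k := by
    have h1 := (card_le_card hsub).trans (card_insert_le a _)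
    have h2 := card_symmDiff_add_two_mul_card_inter S T
    rw [Nat.even_iff] at heven
    omega
  simp_rw [walsh_mul_walsh]
  exact hC U hne heven hle

end EvenPad

end BinaryCode

open BinaryCode

lemma IsKKDesign.sum_walsh_eq_zero {n k : ℕ} {C : Finset (Fin n → ZMod 2)}
    (hC : IsKKDesign n k C) {U : Finset (Fin n)} (hne : U.Nonempty) (heven : Even #U)
    (hle : #U ≤ 2 * k) : ∑ x ∈ C, walsh U x = 0 := by
  obtain ⟨j, hj⟩ := heven
  have hpos := hne.card_pos
  have hUn : #U ≤ n := (card_le_univ U).trans_eq (Fintype.card_fin n)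
  have hmom := choose_mul_moment C (i := 2 * j) (by omega)
  rw [hC.2 j (by omega) (by omega), mul_zero, eq_comm,
    sum_eq_zero_iff_of_nonneg fun _ _ => sq_nonneg _] at hmom
  exact pow_eq_zero_iff two_ne_zero |>.1 (hmom U (mem_powersetCard_univ.2 (by omega)))

theorem stmt_7_general (n k : ℕ) (hn : 0 < n)
    (C : Finset (Fin n → ZMod 2)) (hC : IsKKDesign n k C) :
    ∑ i ∈ Finset.range (k + 1), (n - 1).choose i ≤ C.card := by
  classical
  let a : Fin n := ⟨0, hn⟩
  let A := (range (k + 1)).biUnion fun i => powersetCard i (univ.erase a)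
  have hA : ∀ S ∈ A, a ∉ S ∧ #S ≤ k := by
    intro S hS
    simp only [A, mem_biUnion, mem_range, mem_powersetCard] at hS
    obtain ⟨i, hi, hsub, rfl⟩ := hS
    exact ⟨fun h => notMem_erase a univ (hsub h), by omega⟩
  have hcard : #A = ∑ i ∈ range (k + 1), (n - 1).choose i := by
    rw [card_biUnion_range_powersetCard, card_erase_of_mem (mem_univ a), card_univ,
      Fintype.card_fin]
  rw [← hcard]
  refine card_le_card_of_sum_mul_eq_zero (fun S => walsh (evenPad a S)) (fun S _ => ?_)
    fun S hS T hT hST => ?_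
  · simp_rw [walsh_mul_self, sum_const, nsmul_one]
    exact_mod_cast hC.1.card_pos.ne'
  · exact sum_walsh_evenPad_mul_eq_zero (fun _ => IsKKDesign.sum_walsh_eq_zero hC)
      (hA S hS).1 (hA T hT).1 (hA S hS).2 (hA T hT).2 hST

/-- the universal lower bound `|C| ≥ ∑_{i=0}^k C(n−1,i)` for
`(k,k)`-designs. -/
theorem stmt_7 (n k : ℕ) (hn : 0 < n) (hk : 1 ≤ k) (hkn : 2 * k ≤ n)
    (C : Finset (Fin n → ZMod 2)) (hC : IsKKDesign n k C) :
    ∑ i ∈ Finset.range (k + 1), (n - 1).choose i ≤ C.card :=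
  stmt_7_general n k hn C hC
end

section
/- If n ≡ 3 (mod 4), then every (1,1)-design C ⊆ F_2^n satisfies |C| ≥ n + 1. -/
open Finset

/-!
Encode a word `x` by its sign vector `σ_x ∈ {±1}ⁿ`, so that `n⟨x,y⟩ = σ_x ⬝ σ_y`, and let `M` be
the `|C| × n` matrix with rows `σ_x`. Since `Q₂(t) = (nt² − 1)/(n − 1)`, the condition `M₂(C) = 0`
says `‖M Mᵀ‖_F² = n|C|²`, i.e. `‖Mᵀ M‖_F² = n|C|²`. The `n` diagonal entries of `Mᵀ M` already
equal `|C|`, so `Mᵀ M = |C| • 1`. Hence `M` has rank `n`, giving `|C| ≥ n`; and the vanishing entry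
`(Mᵀ M)₀₁ = #{x₀ = x₁} − #{x₀ ≠ x₁}` makes `|C|` even. As `n` is odd, `|C| ≥ n + 1`.
-/

open Matrix

noncomputable def toSign (a : ZMod 2) : ℝ := if a = 0 then 1 else -1

lemma toSign_mul_toSign (a b : ZMod 2) : toSign a * toSign b = if a = b then 1 else -1 := by
  have h : ∀ c : ZMod 2, c = 0 ∨ c = 1 := by decide
  rcases h a with rfl | rfl <;> rcases h b with rfl | rfl <;> simp [toSign]

lemma sum_toSign_mul_toSign {α : Type*} (s : Finset α) (a b : α → ZMod 2) :
    ∑ x ∈ s, toSign (a x) * toSign (b x) =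
      (#{x ∈ s | a x = b x} : ℝ) - #{x ∈ s | a x ≠ b x} := by
  simp only [toSign_mul_toSign, sum_ite, sum_const, nsmul_eq_mul, mul_one, mul_neg]
  ring

lemma natCast_mul_ip (n : ℕ) (x y : Fin n → ZMod 2) :
    (n : ℝ) * ip n x y = (toSign ∘ x) ⬝ᵥ (toSign ∘ y) := by
  have hcard : (n : ℝ) = #{j | x j = y j} + #{j | x j ≠ y j} := by
    exact_mod_cast ((card_filter_add_card_filter_not _).trans (card_fin n)).symm
  simp only [dotProduct, Function.comp_apply, sum_toSign_mul_toSign]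
  rcases n.eq_zero_or_pos with rfl | hn
  · simp
  · rw [ip, hammingDist]
    field_simp
    linarith

lemma sub_one_mul_kraw_two (n : ℕ) (t : ℝ) (hn : (n : ℝ) ≠ 1) :
    ((n : ℝ) - 1) * kraw n 2 t = n * t ^ 2 - 1 := by
  rw [show kraw n 2 t = ((n : ℝ) * t * t - 1) / ((n : ℝ) - 1) by simp [kraw]]
  field_simp [sub_ne_zero.mpr hn]

lemma sum_sq_dotProduct {α ι : Type*} [Fintype ι] (s : Finset α) (v : α → ι → ℝ) :
    ∑ x ∈ s, ∑ y ∈ s, (v x ⬝ᵥ v y) ^ 2 = ∑ j, ∑ k, (∑ x ∈ s, v x j * v x k) ^ 2 := by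
  simp only [sq, dotProduct, sum_mul_sum]
  simp_rw [sum_comm (s := s) (t := univ)]
  exact sum_congr rfl fun _ _ => sum_congr rfl fun _ _ => sum_congr rfl fun _ _ =>
    sum_congr rfl fun _ _ => mul_mul_mul_comm _ _ _ _

lemma eq_zero_of_sum_sq_eq_sum_diag_sq {ι : Type*} [Fintype ι] [DecidableEq ι] (f : ι → ι → ℝ)
    (h : ∑ j, ∑ k, f j k ^ 2 = ∑ j, f j j ^ 2) {j k : ι} (hjk : j ≠ k) : f j k = 0 := by
  have hoff : ∑ j, ∑ k ∈ univ.erase j, f j k ^ 2 = 0 := by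
    rw [sum_congr rfl fun j _ => (add_sum_erase _ _ (mem_univ j)).symm, sum_add_distrib] at h
    linarith
  have hrow := (sum_eq_zero_iff_of_nonneg fun j _ => sum_nonneg fun k _ => sq_nonneg (f j k)).mp
    hoff j (mem_univ j)
  exact pow_eq_zero_iff two_ne_zero |>.mp <|
    (sum_eq_zero_iff_of_nonneg fun k _ => sq_nonneg (f j k)).mp hrow k
      (mem_erase.mpr ⟨hjk.symm, mem_univ k⟩)

lemma Matrix.card_le_card_of_mul_eq_one {m n R : Type*} [Fintype m] [Fintype n] [DecidableEq n]
    [Field R] {A : Matrix n m R} {B : Matrix m n R} (h : A * B = 1) :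
    Fintype.card n ≤ Fintype.card m :=
  calc Fintype.card n = (A * B).rank := by rw [h, Matrix.rank_one]
    _ ≤ B.rank := Matrix.rank_mul_le_right A B
    _ ≤ Fintype.card m := B.rank_le_card_height

lemma even_card_of_sum_toSign_mul_toSign_eq_zero {α : Type*} (s : Finset α) (a b : α → ZMod 2)
    (h : ∑ x ∈ s, toSign (a x) * toSign (b x) = 0) : Even #s := by
  rw [sum_toSign_mul_toSign, sub_eq_zero] at h
  have hsplit := card_filter_add_card_filter_not (s := s) (fun x => a x = b x)
  exact ⟨#{x ∈ s | a x = b x}, by rw [← hsplit, (by exact_mod_cast h : #{x ∈ s | a x = b x} = _)]⟩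

section SignMatrix

variable {n : ℕ} (C : Finset (Fin n → ZMod 2))

noncomputable def signMatrix : Matrix C (Fin n) ℝ := Matrix.of fun x j => toSign (x.1 j)

lemma transpose_mul_signMatrix_apply (j k : Fin n) :
    ((signMatrix C)ᵀ * signMatrix C) j k = ∑ x ∈ C, toSign (x j) * toSign (x k) := by
  simp only [mul_apply, transpose_apply, signMatrix, of_apply]
  exact sum_coe_sort C fun x => toSign (x j) * toSign (x k)

variable {C}

lemma sum_sq_dotProduct_toSign_of_moment_two_eq_zero (hn : n ≠ 1) (h : moment n C 2 = 0) :
    ∑ x ∈ C, ∑ y ∈ C, ((toSign ∘ x) ⬝ᵥ (toSign ∘ y)) ^ 2 = n * #C ^ 2 := by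
  have hsq (t : ℝ) : ((n : ℝ) * t) ^ 2 = n * (((n : ℝ) - 1) * kraw n 2 t + 1) := by
    rw [sub_one_mul_kraw_two n t (by exact_mod_cast hn)]
    ring
  simp_rw [← natCast_mul_ip, hsq, ← mul_sum, sum_add_distrib, ← mul_sum]
  rw [moment] at h
  simp [h, sq]

lemma transpose_mul_signMatrix_of_moment_two_eq_zero (hn : n ≠ 1) (h : moment n C 2 = 0) :
    (signMatrix C)ᵀ * signMatrix C = (#C : ℝ) • 1 := by
  set G := (signMatrix C)ᵀ * signMatrix C
  have hdiag (j : Fin n) : G j j = #C := by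
    simp [G, transpose_mul_signMatrix_apply, toSign_mul_toSign]
  have hsq : ∑ j, ∑ k, G j k ^ 2 = ∑ j, G j j ^ 2 := by
    simpa [G, hdiag, transpose_mul_signMatrix_apply, sum_sq_dotProduct] using
      sum_sq_dotProduct_toSign_of_moment_two_eq_zero hn h
  ext j k
  rcases eq_or_ne j k with rfl | hjk
  · simp [hdiag]
  · simp [hjk, eq_zero_of_sum_sq_eq_sum_diag_sq G hsq hjk]

end SignMatrix

theorem stmt_15_general (n : ℕ) (hmod : n % 4 = 3)
    (C : Finset (Fin n → ZMod 2)) (hC : C.Nonempty) (hdes : moment n C 2 = 0) :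
    n + 1 ≤ C.card := by
  have hG := transpose_mul_signMatrix_of_moment_two_eq_zero (by omega) hdes
  have hcard : (#C : ℝ) ≠ 0 := by exact_mod_cast hC.card_pos.ne'
  have hle : n ≤ #C := by
    have hinv : ((#C : ℝ)⁻¹ • (signMatrix C)ᵀ) * signMatrix C = 1 := by
      rw [Matrix.smul_mul, hG, smul_smul, inv_mul_cancel₀ hcard, one_smul]
    simpa using Matrix.card_le_card_of_mul_eq_one hinv
  have heven : Even #C := by
    apply even_card_of_sum_toSign_mul_toSign_eq_zero C (· ⟨0, by omega⟩) (· ⟨1, by omega⟩)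
    rw [← transpose_mul_signMatrix_apply, hG]
    simp
  obtain ⟨m, hm⟩ := heven
  omega

/-- for `n ≡ 3 (mod 4)` every `(1,1)`-design has at least `n + 1` points. -/
theorem stmt_15 (n : ℕ) (hn : 2 ≤ n) (hmod : n % 4 = 3)
    (C : Finset (Fin n → ZMod 2)) (hC : C.Nonempty) (hdes : moment n C 2 = 0) :
    n + 1 ≤ C.card :=
  stmt_15_general n hmod C hC hdes
end
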